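/- Let n be a natural number and let F ⊆ SU(2)^6 be the subspace of tuples satisfying system (Fₙ). If (A₁, B₁, A₂, B₂, A₃, B₃) ∈ SU(2)^6 is a tuple whose six coordinates pairwise commute, then this tuple belongs to F, and it lies in the connected component of F (in the subspace topology) containing the identity tuple (1, 1, 1, 1, 1, 1). -/

import Mathlib

/-- `SU(2)`, i.e. `Matrix.specialUnitaryGroup (Fin 2) ℂ`, topologized as a subspace of the
`2 × 2` complex matrices (via the subtype topology). -/
abbrev SU2 := Matrix.specialUnitaryGroup (Fin 2) ℂ

/-- The group structure on `SU(2)` (inverse given by conjugate transpose). -/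
noncomputable instance : Group SU2 :=
  { (inferInstance : Monoid SU2) with
    inv := fun A => ⟨star A.1, by
      refine ⟨⟨?_, ?_⟩, ?_⟩
      · rw [star_star]; exact A.2.1.2
      · rw [star_star]; exact A.2.1.1
      · show Matrix.det (star A.1) = 1
        rw [Matrix.star_eq_conjTranspose, Matrix.det_conjTranspose]
        have h : Matrix.det A.1 = 1 := A.2.2
        rw [h, star_one]⟩
    inv_mul_cancel := fun A => Subtype.ext A.2.1.1 }

/-- The commutator `[a, b] = a * b * a⁻¹ * b⁻¹`. -/
def brk {G : Type*} [Group G] (a b : G) : G := a * b * a⁻¹ * b⁻¹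

/-- System `(Fₙ)` for a tuple `(A₁, B₁, A₂, B₂, A₃, B₃) ∈ SU(2)⁶`, where `X := [A₃,B₃]·A₁`
(natural-number powers). -/
def fixSys (n : ℕ) (A₁ B₁ A₂ B₂ A₃ B₃ : SU2) : Prop :=
  brk A₁ B₁ * brk A₂ B₂ * brk A₃ B₃ = 1 ∧
  (brk A₃ B₃ * A₁) ^ n * A₁ * ((brk A₃ B₃ * A₁) ^ n)⁻¹ = A₁ ∧
  A₁ ^ n = (brk A₃ B₃ * A₁) ^ n ∧
  (brk A₃ B₃ * A₁) ^ n * A₃ * ((brk A₃ B₃ * A₁) ^ n)⁻¹ = A₃ ∧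
  (brk A₃ B₃ * A₁) ^ n * B₃ * ((brk A₃ B₃ * A₁) ^ n)⁻¹ = B₃

/-- The set `F ⊆ SU(2)⁶` of tuples satisfying system `(Fₙ)`. -/
def Fset (n : ℕ) : Set (SU2 × SU2 × SU2 × SU2 × SU2 × SU2) :=
  {p | fixSys n p.1 p.2.1 p.2.2.1 p.2.2.2.1 p.2.2.2.2.1 p.2.2.2.2.2}

/-!
Commuting elements of `SU(2)` lie in a common maximal torus `{U · diag(z, z⁻¹) · U* | z ∈ S¹}`.
If one of them, `A`, is not scalar, the Hermitian matrix `i (A - A*)` is not scalar either, so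
it has two distinct eigenvalues and its unitary eigenbasis `U` diagonalises everything commuting
with `A`; if all of them are scalar, any `U` will do. The torus is a connected abelian subgroup,
and any tuple of its elements satisfies `(Fₙ)` since all the commutators vanish. Hence the sixfold
product of the torus is a connected subset of `F` containing both the given tuple and the identity.
-/

theorem IsPreconnected.mem_connectedComponent_subtype {X : Type*} [TopologicalSpace X]
    {F P : Set X} (hP : IsPreconnected P) (hPF : P ⊆ F) {x y : X} (hx : x ∈ P) (hy : y ∈ P) :
    (⟨x, hPF hx⟩ : F) ∈ connectedComponent (⟨y, hPF hy⟩ : F) := by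
  have hmem := hP.subset_connectedComponentIn hy hPF hx
  rw [connectedComponentIn_eq_image (hPF hy)] at hmem
  obtain ⟨x', hx', rfl⟩ := hmem
  exact hx'

namespace Matrix

open Unitary

theorem conjStarAlgAut_mem_specialUnitaryGroup {n α : Type*} [Fintype n] [DecidableEq n]
    [CommRing α] [StarRing α] (u : unitaryGroup n α) {A : Matrix n n α}
    (hA : A ∈ specialUnitaryGroup n α) : conjStarAlgAut α _ u A ∈ specialUnitaryGroup n α := by
  rw [mem_specialUnitaryGroup_iff] at hA ⊢
  refine ⟨mul_mem (mul_mem u.2 hA.1) (Unitary.star_mem u.2), ?_⟩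
  rw [conjStarAlgAut_apply, det_mul, det_mul, hA.2, mul_one, ← det_mul,
    Unitary.mul_star_self_of_mem u.2, det_one]

theorem star_eq_trace_smul_one_sub {α : Type*} [CommRing α] [StarRing α]
    {A : Matrix (Fin 2) (Fin 2) α} (hA : A ∈ specialUnitaryGroup (Fin 2) α) :
    star A = A.trace • 1 - A := by
  rw [mem_specialUnitaryGroup_iff] at hA
  have hadj : star A = A.adjugate := by
    calc star A = star A * (A * A.adjugate) := by rw [mul_adjugate, hA.2, one_smul, mul_one]
      _ = A.adjugate := by rw [← mul_assoc, Unitary.star_mul_self_of_mem hA.1, one_mul]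
  rw [hadj, adjugate_fin_two, trace_fin_two]
  ext i j; fin_cases i <;> fin_cases j <;> simp

theorem isDiag_of_commute_diagonal {n α : Type*} [Fintype n] [DecidableEq n] [CommRing α]
    [NoZeroDivisors α] {M : Matrix n n α} {d : n → α} (hd : Function.Injective d)
    (h : Commute M (diagonal d)) : M.IsDiag := by
  intro i j hij
  have hMij := congrFun₂ h.eq i j
  rw [mul_diagonal, diagonal_mul] at hMij
  have : M i j * (d j - d i) = 0 := by linear_combination hMij
  exact (mul_eq_zero.mp this).resolve_right (sub_ne_zero.mpr (hd.ne (Ne.symm hij)))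

theorem isHermitian_I_smul_sub_star {n : Type*} (A : Matrix n n ℂ) :
    (Complex.I • (A - star A)).IsHermitian := by
  rw [IsHermitian, conjTranspose_smul, conjTranspose_sub, ← star_eq_conjTranspose,
    ← star_eq_conjTranspose, star_star, Complex.star_def, Complex.conj_I, neg_smul, ← smul_neg,
    neg_sub]

namespace IsHermitian

theorem isDiag_conjStarAlgAut_star_of_commute {𝕜 n : Type*} [RCLike 𝕜] [Fintype n]
    [DecidableEq n] {H C : Matrix n n 𝕜} (hH : H.IsHermitian)
    (hinj : Function.Injective hH.eigenvalues) (hC : Commute C H) :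
    (conjStarAlgAut 𝕜 _ (star hH.eigenvectorUnitary) C).IsDiag := by
  refine isDiag_of_commute_diagonal (RCLike.ofReal_injective.comp hinj) ?_
  rw [← hH.conjStarAlgAut_star_eigenvectorUnitary]
  exact hC.map _

theorem injective_eigenvalues_of_forall_ne_smul_one {𝕜 : Type*} [RCLike 𝕜]
    {H : Matrix (Fin 2) (Fin 2) 𝕜} (hH : H.IsHermitian) (h : ∀ c : 𝕜, H ≠ c • 1) :
    Function.Injective hH.eigenvalues := by
  intro i j hij
  by_contra hne
  have hconst : hH.eigenvalues = fun _ => hH.eigenvalues 0 := by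
    funext k; fin_cases i <;> fin_cases j <;> fin_cases k <;> simp_all
  apply h (hH.eigenvalues 0)
  conv_lhs => rw [hH.spectral_theorem, hconst]
  rw [Function.comp_def, ← smul_one_eq_diagonal, map_smul, map_one]

end IsHermitian

end Matrix

namespace SU2

open Matrix Unitary

theorem diagonal_mem_specialUnitaryGroup (z : Circle) :
    diagonal ![(z : ℂ), ↑z⁻¹] ∈ specialUnitaryGroup (Fin 2) ℂ := by
  have hw (w : Circle) : star (w : ℂ) * w = 1 := by
    rw [Complex.star_def, ← Complex.normSq_eq_conj_mul_self, Circle.normSq_coe,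
      Complex.ofReal_one]
  refine mem_specialUnitaryGroup_iff.mpr ⟨mem_unitaryGroup_iff'.mpr ?_, ?_⟩
  · rw [star_eq_conjTranspose, diagonal_conjTranspose, diagonal_mul_diagonal, ← diagonal_one]
    congr 1
    ext i; fin_cases i <;> exact hw _
  · simp [det_diagonal, Fin.prod_univ_two]

theorem exists_eq_diagonal_of_isDiag {M : Matrix (Fin 2) (Fin 2) ℂ}
    (hM : M ∈ specialUnitaryGroup (Fin 2) ℂ) (hdiag : M.IsDiag) :
    ∃ z : Circle, M = diagonal ![(z : ℂ), ↑z⁻¹] := by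
  obtain ⟨hunit, hdet⟩ := mem_specialUnitaryGroup_iff.mp hM
  have h00 : M 0 0 ∈ unitary ℂ := by
    rw [Unitary.mem_iff_star_mul_self]
    simpa [mul_apply, Fin.sum_univ_two, hdiag (i := 1) (j := 0) (by decide)] using
      congrFun₂ (mem_unitaryGroup_iff'.mp hunit) 0 0
  refine ⟨⟨M 0 0, mem_sphere_zero_iff_norm.mpr (CStarRing.norm_of_mem_unitary h00)⟩, ?_⟩
  have h11 : M 1 1 = (M 0 0)⁻¹ := by
    rw [det_fin_two, hdiag (i := 0) (j := 1) (by decide), zero_mul, sub_zero] at hdet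
    exact eq_inv_of_mul_eq_one_right hdet
  conv_lhs => rw [← hdiag.diagonal_diag]
  congr 1
  ext i; fin_cases i
  · rfl
  · exact h11

theorem I_smul_sub_star_ne_smul_one {A : Matrix (Fin 2) (Fin 2) ℂ}
    (hA : A ∈ specialUnitaryGroup (Fin 2) ℂ) (hns : ∀ c : ℂ, A ≠ c • 1) (c : ℂ) :
    Complex.I • (A - star A) ≠ c • 1 := by
  intro h
  apply hns ((A.trace - Complex.I * c) / 2)
  rw [star_eq_trace_smul_one_sub hA] at h
  have h' : A - (A.trace • 1 - A) = (-Complex.I * c) • 1 := by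
    rw [← smul_smul, ← h, smul_smul, neg_mul, Complex.I_mul_I, neg_neg, one_smul]
  linear_combination (norm := module) (1 / 2 : ℂ) • h'

theorem exists_isHermitian_commute {S : Set SU2} (hS : ∀ x ∈ S, ∀ y ∈ S, x * y = y * x) :
    ∃ (H : Matrix (Fin 2) (Fin 2) ℂ) (hH : H.IsHermitian),
      Function.Injective hH.eigenvalues ∧ ∀ C ∈ S, Commute C.1 H := by
  by_cases hns : ∃ A ∈ S, ∀ c : ℂ, A.1 ≠ c • 1
  · obtain ⟨A, hAS, hns⟩ := hns
    refine ⟨_, isHermitian_I_smul_sub_star A.1,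
      IsHermitian.injective_eigenvalues_of_forall_ne_smul_one _
        (I_smul_sub_star_ne_smul_one A.2 hns), fun C hC => ?_⟩
    have hCA : Commute C A := hS C hC A hAS
    have hCA₁ : Commute C.1 A.1 := hCA.map (specialUnitaryGroup (Fin 2) ℂ).subtype
    have hCA₂ : Commute C.1 (star A.1) :=
      hCA.inv_right.map (specialUnitaryGroup (Fin 2) ℂ).subtype
    exact (hCA₁.sub_right hCA₂).smul_right _
  · push Not at hns
    have hH : (diagonal ![(1 : ℂ), 0]).IsHermitian :=
      isHermitian_diagonal_iff.mpr fun i => by fin_cases i <;> simp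
    refine ⟨_, hH, hH.injective_eigenvalues_of_forall_ne_smul_one fun c h => ?_, fun C hC => ?_⟩
    · have h00 : (1 : ℂ) = c := by simpa using congrFun₂ h 0 0
      have h11 : (0 : ℂ) = c := by simpa using congrFun₂ h 1 1
      exact one_ne_zero (h00.trans h11.symm)
    · obtain ⟨c, hc⟩ := hns C hC
      rw [hc]
      exact (Commute.one_left _).smul_left c

noncomputable def torus (U : unitaryGroup (Fin 2) ℂ) : Circle →* SU2 where
  toFun z := ⟨conjStarAlgAut ℂ _ U (diagonal ![(z : ℂ), ↑z⁻¹]),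
    conjStarAlgAut_mem_specialUnitaryGroup U (diagonal_mem_specialUnitaryGroup z)⟩
  map_one' := Subtype.ext <| by
    show conjStarAlgAut ℂ _ U (diagonal ![((1 : Circle) : ℂ), ↑(1 : Circle)⁻¹]) = 1
    rw [← map_one (conjStarAlgAut ℂ _ U), ← diagonal_one]
    exact congrArg (fun v => conjStarAlgAut ℂ _ U (diagonal v)) (by ext i; fin_cases i <;> simp)
  map_mul' z w := Subtype.ext <| by
    show _ = conjStarAlgAut ℂ _ U _ * conjStarAlgAut ℂ _ U _
    rw [← map_mul, diagonal_mul_diagonal]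
    exact congrArg (fun v => conjStarAlgAut ℂ _ U (diagonal v))
      (by ext i; fin_cases i <;> simp [mul_comm])

theorem continuous_torus (U : unitaryGroup (Fin 2) ℂ) : Continuous (torus U) := by
  refine Continuous.subtype_mk ?_ _
  simp only [conjStarAlgAut_apply]
  fun_prop

theorem isConnected_range_torus (U : unitaryGroup (Fin 2) ℂ) :
    IsConnected (Set.range (torus U)) :=
  isConnected_range (continuous_torus U)

theorem commute_of_mem_range_torus {U : unitaryGroup (Fin 2) ℂ} {x y : SU2}
    (hx : x ∈ Set.range (torus U)) (hy : y ∈ Set.range (torus U)) : x * y = y * x := by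
  obtain ⟨z, rfl⟩ := hx
  obtain ⟨w, rfl⟩ := hy
  rw [← map_mul, mul_comm, map_mul]

theorem exists_subset_range_torus {S : Set SU2} (hS : ∀ x ∈ S, ∀ y ∈ S, x * y = y * x) :
    ∃ U, S ⊆ Set.range (torus U) := by
  obtain ⟨H, hH, hinj, hcomm⟩ := exists_isHermitian_commute hS
  set U := hH.eigenvectorUnitary
  refine ⟨U, fun C hC => ?_⟩
  obtain ⟨z, hz⟩ := exists_eq_diagonal_of_isDiag
    (conjStarAlgAut_mem_specialUnitaryGroup (star U) C.2)
    (hH.isDiag_conjStarAlgAut_star_of_commute hinj (hcomm C hC))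
  refine ⟨z, Subtype.ext ?_⟩
  show conjStarAlgAut ℂ _ U _ = C.1
  rw [← hz, ← conjStarAlgAut_mul_apply, Unitary.mul_star_self, map_one, StarAlgEquiv.one_apply]

end SU2

theorem fixSys_of_commute (n : ℕ) {A₁ B₁ A₂ B₂ A₃ B₃ : SU2} (h₁ : A₁ * B₁ = B₁ * A₁)
    (h₂ : A₂ * B₂ = B₂ * A₂) (h₃ : A₃ * B₃ = B₃ * A₃) (hA : A₁ * A₃ = A₃ * A₁)
    (hB : A₁ * B₃ = B₃ * A₁) : fixSys n A₁ B₁ A₂ B₂ A₃ B₃ := by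
  have hbrk {a b : SU2} (h : a * b = b * a) : brk a b = 1 := by
    rw [brk, h, mul_inv_cancel_right, mul_inv_cancel]
  have hconj {c : SU2} (h : Commute A₁ c) : A₁ ^ n * c * (A₁ ^ n)⁻¹ = c := by
    rw [(h.pow_left n).eq, mul_inv_cancel_right]
  simp only [fixSys, hbrk h₁, hbrk h₂, hbrk h₃, one_mul, true_and]
  exact ⟨hconj rfl, hconj hA, hconj hB⟩

theorem prod_subset_Fset {T : Set SU2} (hT : ∀ x ∈ T, ∀ y ∈ T, x * y = y * x) (n : ℕ) :
    T ×ˢ T ×ˢ T ×ˢ T ×ˢ T ×ˢ T ⊆ Fset n := by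
  rintro ⟨A₁, B₁, A₂, B₂, A₃, B₃⟩ ⟨hA₁, hB₁, hA₂, hB₂, hA₃, hB₃⟩
  exact fixSys_of_commute n (hT _ hA₁ _ hB₁) (hT _ hA₂ _ hB₂) (hT _ hA₃ _ hB₃)
    (hT _ hA₁ _ hA₃) (hT _ hA₁ _ hB₃)

/-- Any tuple in `SU(2)⁶` whose six coordinates pairwise commute (an abelian
representation) satisfies system `(Fₙ)`, and lies in the connected component of `F`
containing the identity tuple. -/
theorem abelian_in_component_of_trivial (n : ℕ) (A₁ B₁ A₂ B₂ A₃ B₃ : SU2)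
    (hcomm : ∀ x ∈ [A₁, B₁, A₂, B₂, A₃, B₃], ∀ y ∈ [A₁, B₁, A₂, B₂, A₃, B₃],
      x * y = y * x) :
    ∃ (hx : (A₁, B₁, A₂, B₂, A₃, B₃) ∈ Fset n)
      (h1 : ((1, 1, 1, 1, 1, 1) : SU2 × SU2 × SU2 × SU2 × SU2 × SU2) ∈ Fset n),
      (⟨(A₁, B₁, A₂, B₂, A₃, B₃), hx⟩ : Fset n) ∈
        connectedComponent (⟨(1, 1, 1, 1, 1, 1), h1⟩ : Fset n) := by
  obtain ⟨U, hU⟩ := SU2.exists_subset_range_torus (S := {x | x ∈ [A₁, B₁, A₂, B₂, A₃, B₃]}) hcomm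
  set T := Set.range (SU2.torus U)
  have hT : IsConnected T := SU2.isConnected_range_torus U
  have hPF := prod_subset_Fset (fun _ hx _ hy => SU2.commute_of_mem_range_torus (U := U) hx hy) n
  have hP := hT.prod (hT.prod (hT.prod (hT.prod (hT.prod hT))))
  have h1 : (1 : SU2) ∈ T := ⟨1, map_one _⟩
  have hA : (A₁, B₁, A₂, B₂, A₃, B₃) ∈ T ×ˢ T ×ˢ T ×ˢ T ×ˢ T ×ˢ T :=
    ⟨hU (by simp), hU (by simp), hU (by simp), hU (by simp), hU (by simp), hU (by simp)⟩
  exact ⟨hPF hA, hPF ⟨h1, h1, h1, h1, h1, h1⟩,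
    hP.isPreconnected.mem_connectedComponent_subtype hPF hA ⟨h1, h1, h1, h1, h1, h1⟩⟩
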